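/- Let C be a self-dual linear code of length n over F_q (so that C^⊥ = C, where C^⊥ is the dual code with respect to the standard inner product). Then the matrix q^{−1/2}·[[1, q−1],[1, −1]] lies in the stabilizer in GL_2(C) of the homogeneous weight enumerator W_C(x,y). -/

import Mathlib

open Finset

noncomputable def homWeightEnum (R : Type*) [CommRing R] {F : Type*} [Field F] [Fintype F]
    [DecidableEq F] {ι : Type*} [Fintype ι] (C : Submodule F (ι → F)) : MvPolynomial (Fin 2) R :=
  ∑ c ∈ (Set.toFinite (C : Set (ι → F))).toFinset,
    MvPolynomial.X 0 ^ (Fintype.card ι - hammingNorm c) * MvPolynomial.X 1 ^ hammingNorm c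

noncomputable def matAct (A : Matrix (Fin 2) (Fin 2) ℂ) (p : MvPolynomial (Fin 2) ℂ) :
    MvPolynomial (Fin 2) ℂ :=
  MvPolynomial.aeval
    (fun i => MvPolynomial.C (A i 0) * MvPolynomial.X 0 + MvPolynomial.C (A i 1) * MvPolynomial.X 1) p

def dualCode {F : Type*} [Field F] {ι : Type*} [Fintype ι] (C : Submodule F (ι → F)) :
    Submodule F (ι → F) where
  carrier := {v | ∀ c ∈ C, ∑ i, v i * c i = 0}
  add_mem' := by
    intro a b ha hb c hc
    simp only [Pi.add_apply, add_mul, Finset.sum_add_distrib, ha c hc, hb c hc, add_zero]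
  zero_mem' := by intro c hc; simp
  smul_mem' := by
    intro t v hv c hc
    simp only [Pi.smul_apply, smul_eq_mul, mul_assoc, ← Finset.mul_sum, hv c hc, mul_zero]

/-!
Expanding with a primitive additive character `χ` of `F`, the coordinatewise identity
`∑ₜ χ(t a) (if t = 0 then x else y) = if a = 0 then x + (q - 1) y else x - y` turns
`(x + (q-1)y)^(n - wt c) (x - y)^(wt c)` into `∑ᵤ χ(u ⬝ c) x^(n - wt u) y^(wt u)`. Summing over
`c ∈ C`, orthogonality of characters keeps only `u ∈ C^⊥`, which is the MacWilliams identity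
`W_C(x + (q-1)y, x - y) = |C| W_{C^⊥}(x, y)`. At `x = y = 1` it gives `|C| |C^⊥| = q^n`, so for a
self-dual code `|C| = q^(n/2)`, and this is the factor that `q^(-1/2)` removes, `W_C` being
homogeneous of degree `n`.
-/

open MvPolynomial Matrix

lemma AddChar.map_sum_eq_prod {A M ι : Type*} [AddCommMonoid A] [CommMonoid M]
    (χ : AddChar A M) (s : Finset ι) (f : ι → A) : χ (∑ i ∈ s, f i) = ∏ i ∈ s, χ (f i) := by
  have := map_prod χ.toMonoidHom (fun i => Multiplicative.ofAdd (f i)) s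
  rwa [← ofAdd_sum] at this

lemma eval_matAct (A : Matrix (Fin 2) (Fin 2) ℂ) (p : MvPolynomial (Fin 2) ℂ) (z : Fin 2 → ℂ) :
    eval z (matAct A p) = eval (A *ᵥ z) p := by
  rw [matAct, ← aeval_eq_eval, ← AlgHom.comp_apply, comp_aeval, aeval_eq_eval]
  congr
  funext i
  simp [mulVec, dotProduct, Fin.sum_univ_two]

section WeightMonomial

variable {β : Type*} [Zero β] [DecidableEq β] {ι : Type*} [Fintype ι]

def weightMonomial {R : Type*} [CommMonoid R] (x y : R) (c : ι → β) : R :=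
  x ^ (Fintype.card ι - hammingNorm c) * y ^ hammingNorm c

lemma prod_ite_eq_weightMonomial {R : Type*} [CommMonoid R] (x y : R) (c : ι → β) :
    ∏ i, (if c i = 0 then x else y) = weightMonomial x y c := by
  have hwt : (univ.filter fun i => ¬c i = 0).card = hammingNorm c := rfl
  have hzero : (univ.filter fun i => c i = 0).card = Fintype.card ι - hammingNorm c := by
    have hsplit := Finset.card_filter_add_card_filter_not (s := univ) (fun i => c i = 0)
    rw [Finset.card_univ, hwt] at hsplit
    omega
  rw [Finset.prod_ite, Finset.prod_const, Finset.prod_const, hzero, hwt, weightMonomial]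

lemma weightMonomial_mul_mul {R : Type*} [CommMonoid R] (r x y : R) (c : ι → β) :
    weightMonomial (r * x) (r * y) c = r ^ Fintype.card ι * weightMonomial x y c := by
  rw [weightMonomial, weightMonomial, mul_pow, mul_pow, mul_mul_mul_comm, ← pow_add,
    Nat.sub_add_cancel hammingNorm_le_card_fintype]

lemma weightMonomial_one_one {R : Type*} [CommMonoid R] (c : ι → β) :
    weightMonomial (1 : R) 1 c = 1 := by
  simp [weightMonomial]

lemma weightMonomial_zero_right {R : Type*} [CommMonoidWithZero R] (x : R) (c : ι → β) :
    weightMonomial x 0 c = if c = 0 then x ^ Fintype.card ι else 0 := by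
  split_ifs with hc
  · simp [weightMonomial, hc]
  · rw [weightMonomial, zero_pow (hammingNorm_eq_zero.not.2 hc), mul_zero]

end WeightMonomial

section DualCode

variable {F : Type*} [Field F] {ι : Type*} [Fintype ι]

lemma mem_dualCode_iff (C : Submodule F (ι → F)) (u : ι → F) :
    u ∈ dualCode C ↔ ∀ c ∈ C, u ⬝ᵥ c = 0 :=
  Iff.rfl

open Classical in
lemma sum_addChar_dotProduct {R : Type*} [CommRing R] [IsDomain R] {χ : AddChar F R}
    (hχ : χ.IsPrimitive) (C : Submodule F (ι → F)) [Fintype C] (u : ι → F) :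
    ∑ c : C, χ (u ⬝ᵥ c) = if u ∈ dualCode C then (Fintype.card C : R) else 0 := by
  let ψ : AddChar C R := χ.compAddMonoidHom
    { toFun := fun c => u ⬝ᵥ (c : ι → F), map_zero' := by simp,
      map_add' := fun a b => by simp [dotProduct_add] }
  have hψ : ψ = 0 ↔ u ∈ dualCode C := by
    refine ⟨fun h c hc => ?_, fun hu => AddChar.eq_zero_iff.2 fun c => ?_⟩
    · by_contra hne
      obtain ⟨t, ht⟩ := AddChar.ne_one_iff.1 (hχ hne)
      have := AddChar.eq_zero_iff.1 h ⟨t • c, C.smul_mem t hc⟩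
      simp [ψ, dotProduct_smul, mul_comm] at this ht
      exact ht this
    · show χ (u ⬝ᵥ c) = 1
      rw [(mem_dualCode_iff C u).1 hu c c.2, AddChar.map_zero_eq_one]
  have hsum := AddChar.sum_eq_ite ψ
  simp only [hψ] at hsum
  exact hsum

end DualCode

section MacWilliams

variable {F : Type*} [Field F] [Fintype F] [DecidableEq F] {ι : Type*} [Fintype ι]

lemma eval_homWeightEnum {R : Type*} [CommRing R] (C : Submodule F (ι → F)) [Fintype C]
    (z : Fin 2 → R) :
    eval z (homWeightEnum R C) = ∑ c : C, weightMonomial (z 0) (z 1) (c : ι → F) := by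
  rw [homWeightEnum, map_sum,
    Finset.sum_subtype (F := inferInstance) (p := (· ∈ C)) _ (fun c => by simp)]
  simp [weightMonomial]

lemma eval_smul_homWeightEnum {R : Type*} [CommRing R] (C : Submodule F (ι → F)) (r : R)
    (z : Fin 2 → R) :
    eval (r • z) (homWeightEnum R C) = r ^ Fintype.card ι * eval z (homWeightEnum R C) := by
  classical
  simp only [eval_homWeightEnum, Pi.smul_apply, smul_eq_mul, weightMonomial_mul_mul, mul_sum]

lemma sum_addChar_mul_ite {R : Type*} [CommRing R] [IsDomain R] {χ : AddChar F R}
    (hχ : χ.IsPrimitive) (a : F) (x y : R) :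
    ∑ t, χ (t * a) * (if t = 0 then x else y) =
      if a = 0 then x + (Fintype.card F - 1) * y else x - y := by
  have hsplit : ∀ t : F, χ (t * a) * (if t = 0 then x else y) =
      χ (t * a) * y + if t = 0 then x - y else 0 := by
    intro t
    split_ifs with ht <;> simp [ht]
  simp_rw [hsplit, sum_add_distrib, ← sum_mul, AddChar.sum_mulShift a hχ, sum_ite_eq', mem_univ,
    if_true]
  split_ifs <;> ring

lemma weightMonomial_eq_sum_addChar_dotProduct [DecidableEq ι] {R : Type*} [CommRing R]
    [IsDomain R] {χ : AddChar F R} (hχ : χ.IsPrimitive) (x y : R) (c : ι → F) :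
    weightMonomial (x + (Fintype.card F - 1) * y) (x - y) c =
      ∑ u : ι → F, χ (u ⬝ᵥ c) * weightMonomial x y u := by
  calc weightMonomial (x + (Fintype.card F - 1) * y) (x - y) c
      = ∏ i, ∑ t, χ (t * c i) * (if t = 0 then x else y) := by
        simp_rw [sum_addChar_mul_ite hχ, prod_ite_eq_weightMonomial]
    _ = ∑ u : ι → F, ∏ i, χ (u i * c i) * (if u i = 0 then x else y) := Fintype.prod_sum _
    _ = ∑ u : ι → F, χ (u ⬝ᵥ c) * weightMonomial x y u := by
        simp_rw [prod_mul_distrib, prod_ite_eq_weightMonomial, dotProduct,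
          AddChar.map_sum_eq_prod]

lemma eval_homWeightEnum_zero_right {R : Type*} [CommRing R] (C : Submodule F (ι → F)) (x : R) :
    eval ![x, 0] (homWeightEnum R C) = x ^ Fintype.card ι := by
  classical
  simp [eval_homWeightEnum, weightMonomial_zero_right]

lemma eval_homWeightEnum_one_one {R : Type*} [CommRing R] (C : Submodule F (ι → F)) :
    eval ![1, 1] (homWeightEnum R C) = Nat.card C := by
  classical
  simp [eval_homWeightEnum, weightMonomial_one_one]

theorem macWilliams_identity (C : Submodule F (ι → F)) (x y : ℂ) :
    eval ![x + (Fintype.card F - 1) * y, x - y] (homWeightEnum ℂ C) =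
      Nat.card C * eval ![x, y] (homWeightEnum ℂ (dualCode C)) := by
  classical
  set χ := AddChar.FiniteField.primitiveChar_to_Complex F
  have hχ : χ.IsPrimitive := AddChar.FiniteField.primitiveChar_to_Complex_isPrimitive F
  calc eval ![x + (Fintype.card F - 1) * y, x - y] (homWeightEnum ℂ C)
      = ∑ c : C, ∑ u : ι → F, χ (u ⬝ᵥ c) * weightMonomial x y u := by
        simp [eval_homWeightEnum, weightMonomial_eq_sum_addChar_dotProduct hχ]
    _ = ∑ u : ι → F, (∑ c : C, χ (u ⬝ᵥ c)) * weightMonomial x y u := by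
        rw [sum_comm]
        simp_rw [sum_mul]
    _ = ∑ u ∈ univ.filter (· ∈ dualCode C), (Fintype.card C : ℂ) * weightMonomial x y u := by
        simp_rw [sum_addChar_dotProduct hχ, ite_mul, zero_mul, sum_filter]
    _ = Nat.card C * eval ![x, y] (homWeightEnum ℂ (dualCode C)) := by
        rw [eval_homWeightEnum, ← mul_sum, Nat.card_eq_fintype_card,
          Finset.sum_subtype (F := inferInstance) (p := (· ∈ dualCode C)) _ (fun u => by simp)]
        rfl

theorem card_mul_card_dualCode (C : Submodule F (ι → F)) :
    Nat.card C * Nat.card (dualCode C) = Fintype.card F ^ Fintype.card ι := by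
  have h := macWilliams_identity C 1 1
  rw [mul_one, add_sub_cancel, sub_self, eval_homWeightEnum_zero_right,
    eval_homWeightEnum_one_one] at h
  exact_mod_cast h.symm

lemma sqrt_card_pow_eq_card_of_dualCode_eq_self {C : Submodule F (ι → F)}
    (hsd : dualCode C = C) : √(Fintype.card F) ^ Fintype.card ι = Nat.card C := by
  have h := card_mul_card_dualCode C
  rw [hsd] at h
  rw [← Real.sqrt_mul_self (Nat.cast_nonneg (Nat.card C)), ← Nat.cast_mul, h, Nat.cast_pow,
    eq_comm, Real.sqrt_eq_iff_mul_self_eq (by positivity) (by positivity), ← mul_pow,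
    Real.mul_self_sqrt (Nat.cast_nonneg _)]

end MacWilliams

/-- the MacWilliams matrix `q^{-1/2}·[[1, q-1], [1, -1]]` stabilizes the
homogeneous weight enumerator of a self-dual code. -/
theorem self_dual_macwilliams_stabilizer {F : Type*} [Field F] [Fintype F] [DecidableEq F]
    {n : ℕ} (C : Submodule F (Fin n → F)) (hsd : dualCode C = C) :
    matAct (((Real.sqrt (Fintype.card F) : ℂ))⁻¹ •
        ![![1, (Fintype.card F : ℂ) - 1], ![1, -1]])
      (homWeightEnum ℂ C) = homWeightEnum ℂ C := by
  refine MvPolynomial.funext fun z => ?_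
  have hmulVec : ((Real.sqrt (Fintype.card F) : ℂ)⁻¹ •
      ![![1, (Fintype.card F : ℂ) - 1], ![1, -1]] : Matrix (Fin 2) (Fin 2) ℂ) *ᵥ z =
      (Real.sqrt (Fintype.card F) : ℂ)⁻¹ • ![z 0 + (Fintype.card F - 1) * z 1, z 0 - z 1] := by
    ext i
    fin_cases i <;> simp [mulVec, dotProduct, Fin.sum_univ_two] <;> ring
  have hcard : (Real.sqrt (Fintype.card F) : ℂ) ^ Fintype.card (Fin n) = Nat.card C := by
    exact_mod_cast congrArg Complex.ofReal (sqrt_card_pow_eq_card_of_dualCode_eq_self hsd)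
  have hcard_ne : (Nat.card C : ℂ) ≠ 0 := Nat.cast_ne_zero.2 Nat.card_pos.ne'
  -- `rw [eval_matAct]` fails: the matrix literal in the statement elaborates at function type.
  refine ((eval_matAct _ _ z).trans (congrArg (eval · _) hmulVec)).trans ?_
  rw [eval_smul_homWeightEnum, macWilliams_identity, hsd,
    ← mul_assoc, inv_pow, hcard, inv_mul_cancel₀ hcard_ne, one_mul]
  congr
  ext i
  fin_cases i <;> rfl
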